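/- arXiv:2404.13410 — 9 statements merged into one kernel-verified Lean document; each statement's English description precedes it below -/
import Mathlib

section
/- Let α > γ > 0 and σ ≥ μ > 0. Then the function β ↦ −δ₁(β) is strictly increasing on the interval (σ/γ, +∞), where δ₁(β) = (1/2)·(μ a_β + σ b_β − √(4β²αγ a_β b_β + (μ a_β − σ b_β)²)). -/
/-!
`-δ₁(β)` is the positive root of `x² + s x - c`, where `s = μ a_β + σ b_β` and
`c = (β²αγ - μσ) a_β b_β ≥ 0`; this root decreases in `s` and strictly increases in `c`.
On `(σ/γ, ∞)`, `s` decreases and `c` increases strictly with `β`: both are linear-over-quadratic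
rational functions of `β`, and the sign of their difference quotients is that of a symmetric
bilinear form in the two arguments, which is positive once it is nonnegative at the corner
`(σ/γ, σ/γ)` and increasing beyond it. At that corner the two forms take the values
`σ(α - γ)(ασ - γμ)/γ` and `σ(ασ - γμ)²/γ`, which is where `α > γ` and `σ ≥ μ` enter.
-/

/-- The positive constant solution component `a_β`. -/
noncomputable def aβ (μ σ α γ β : ℝ) : ℝ := (β * α - μ) * σ / (β ^ 2 * α * γ - μ * σ)

/-- The positive constant solution component `b_β`. -/
noncomputable def bβ (μ σ α γ β : ℝ) : ℝ := (β * γ - σ) * μ / (β ^ 2 * α * γ - μ * σ)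

/-- The smaller eigenvalue `δ₁(β)` of the linearization matrix. -/
noncomputable def δ₁ (μ σ α γ β : ℝ) : ℝ :=
  (1 / 2) * (μ * aβ μ σ α γ β + σ * bβ μ σ α γ β -
    Real.sqrt (4 * β ^ 2 * α * γ * aβ μ σ α γ β * bβ μ σ α γ β +
      (μ * aβ μ σ α γ β - σ * bβ μ σ α γ β) ^ 2))

/-- The nonnegative root of `x² + s x - c` when `0 ≤ c`. -/
noncomputable def posRoot (s c : ℝ) : ℝ := (√(s ^ 2 + 4 * c) - s) / 2

theorem posRoot_le_posRoot_left {s s' c : ℝ} (hc : 0 ≤ c) (hs : s' ≤ s) :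
    posRoot s c ≤ posRoot s' c := by
  have hs' : s' ≤ √(s' ^ 2 + 4 * c) := Real.le_sqrt_of_sq_le (by linarith)
  have h : √(s ^ 2 + 4 * c) ≤ √(s' ^ 2 + 4 * c) + (s - s') := by
    rw [Real.sqrt_le_iff]
    refine ⟨by positivity, ?_⟩
    nlinarith [Real.sq_sqrt (show 0 ≤ s' ^ 2 + 4 * c by positivity)]
  unfold posRoot
  linarith

theorem posRoot_lt_posRoot_right {s c c' : ℝ} (hc : 0 ≤ c) (hcc' : c < c') :
    posRoot s c < posRoot s c' := by
  have h : √(s ^ 2 + 4 * c) < √(s ^ 2 + 4 * c') :=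
    Real.sqrt_lt_sqrt (by positivity) (by linarith)
  unfold posRoot
  linarith

theorem bilin_pos_of_lt {k l n x₀ x y : ℝ} (hk : 0 < k) (hl : l ≤ k * x₀)
    (h₀ : 0 ≤ k * x₀ ^ 2 - 2 * l * x₀ + n) (hx : x₀ < x) (hy : x₀ < y) :
    0 < k * x * y - l * (x + y) + n := by
  have hxy : 0 < k * ((x - x₀) * (y - x₀)) := mul_pos hk (mul_pos (by linarith) (by linarith))
  have hlx : 0 ≤ (k * x₀ - l) * (x - x₀) := mul_nonneg (by linarith) (by linarith)
  have hly : 0 ≤ (k * x₀ - l) * (y - x₀) := mul_nonneg (by linarith) (by linarith)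
  linear_combination hxy + hlx + hly + h₀

theorem linear_div_quadratic_lt {p m q r x y : ℝ} (hx : 0 < q * x ^ 2 - r)
    (hy : 0 < q * y ^ 2 - r) (hxy : x < y) (hE : 0 < p * q * x * y - m * q * (x + y) + p * r) :
    (p * y - m) / (q * y ^ 2 - r) < (p * x - m) / (q * x ^ 2 - r) := by
  rw [div_lt_div_iff₀ hy hx]
  linear_combination mul_pos (sub_pos.2 hxy) hE

noncomputable def sβ (μ σ α γ β : ℝ) : ℝ := μ * aβ μ σ α γ β + σ * bβ μ σ α γ β

noncomputable def cβ (μ σ α γ β : ℝ) : ℝ :=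
  (β ^ 2 * α * γ - μ * σ) * aβ μ σ α γ β * bβ μ σ α γ β

section

variable {μ σ α γ β : ℝ}

theorem neg_δ₁_eq_posRoot : -δ₁ μ σ α γ β = posRoot (sβ μ σ α γ β) (cβ μ σ α γ β) := by
  unfold δ₁ posRoot sβ cβ
  ring_nf

theorem sβ_eq :
    sβ μ σ α γ β = μ * σ * (((α + γ) * β - (μ + σ)) / (α * γ * β ^ 2 - μ * σ)) := by
  unfold sβ aβ bβ
  rw [show β ^ 2 * α * γ = α * γ * β ^ 2 by ring]
  field_simp
  ring

theorem cβ_eq (hD : α * γ * β ^ 2 - μ * σ ≠ 0) :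
    cβ μ σ α γ β =
      μ * σ - μ * σ * (((α * σ + γ * μ) * β - 2 * (μ * σ)) / (α * γ * β ^ 2 - μ * σ)) := by
  unfold cβ aβ bβ
  rw [show β ^ 2 * α * γ = α * γ * β ^ 2 by ring]
  field_simp
  ring

theorem mul_sq_sub_mul_pos (hαγ : γ < α) (hγ : 0 < γ) (hμσ : μ ≤ σ) (hμ : 0 < μ)
    (hβ : σ / γ < β) :
    0 < α * γ * β ^ 2 - μ * σ := by
  have hβγ : σ < β * γ := (div_lt_iff₀ hγ).1 hβ
  have hβα : μ < β * α := by nlinarith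
  nlinarith [mul_lt_mul'' hβα hβγ hμ.le (by linarith)]

theorem cβ_nonneg (hαγ : γ < α) (hγ : 0 < γ) (hμσ : μ ≤ σ) (hμ : 0 < μ) (hβ : σ / γ < β) :
    0 ≤ cβ μ σ α γ β := by
  have hD : 0 < β ^ 2 * α * γ - μ * σ := by linarith [mul_sq_sub_mul_pos hαγ hγ hμσ hμ hβ]
  have hβγ : σ < β * γ := (div_lt_iff₀ hγ).1 hβ
  have hβα : μ < β * α := by nlinarith
  unfold cβ aβ bβ
  refine mul_nonneg (mul_nonneg hD.le (div_nonneg ?_ hD.le)) (div_nonneg ?_ hD.le) <;>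
    nlinarith

theorem sβ_lt_sβ (hαγ : γ < α) (hγ : 0 < γ) (hμσ : μ ≤ σ) (hμ : 0 < μ) {x y : ℝ}
    (hx : σ / γ < x) (hxy : x < y) : sβ μ σ α γ y < sβ μ σ α γ x := by
  have hDx := mul_sq_sub_mul_pos hαγ hγ hμσ hμ hx
  have hDy := mul_sq_sub_mul_pos hαγ hγ hμσ hμ (hx.trans hxy)
  have hσ : 0 < σ := hμ.trans_le hμσ
  rw [sβ_eq, sβ_eq]
  refine mul_lt_mul_of_pos_left (linear_div_quadratic_lt hDx hDy hxy ?_) (by positivity)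
  obtain ⟨x₀, rfl⟩ : ∃ x₀, σ = γ * x₀ := ⟨σ / γ, by field_simp⟩
  rw [mul_div_cancel_left₀ _ hγ.ne'] at hx
  have hα : 0 < α := hγ.trans hαγ
  have hx₀ : μ ≤ α * x₀ := by nlinarith
  refine bilin_pos_of_lt (by positivity) ?_ ?_ hx (hx.trans hxy)
  · linear_combination mul_nonneg (mul_pos hα hγ).le (sub_nonneg.2 hx₀)
  · linear_combination mul_nonneg (mul_nonneg hσ.le (sub_nonneg.2 hαγ.le)) (sub_nonneg.2 hx₀)

theorem cβ_lt_cβ (hαγ : γ < α) (hγ : 0 < γ) (hμσ : μ ≤ σ) (hμ : 0 < μ) {x y : ℝ}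
    (hx : σ / γ < x) (hxy : x < y) : cβ μ σ α γ x < cβ μ σ α γ y := by
  have hDx := mul_sq_sub_mul_pos hαγ hγ hμσ hμ hx
  have hDy := mul_sq_sub_mul_pos hαγ hγ hμσ hμ (hx.trans hxy)
  have hσ : 0 < σ := hμ.trans_le hμσ
  rw [cβ_eq hDx.ne', cβ_eq hDy.ne', sub_lt_sub_iff_left]
  refine mul_lt_mul_of_pos_left (linear_div_quadratic_lt hDx hDy hxy ?_) (by positivity)
  obtain ⟨x₀, rfl⟩ : ∃ x₀, σ = γ * x₀ := ⟨σ / γ, by field_simp⟩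
  rw [mul_div_cancel_left₀ _ hγ.ne'] at hx
  have hα : 0 < α := hγ.trans hαγ
  have hx₀ : μ ≤ α * x₀ := by nlinarith
  refine bilin_pos_of_lt (by positivity) ?_ ?_ hx (hx.trans hxy)
  · linear_combination mul_nonneg (mul_pos (mul_pos hα hγ) hσ).le (sub_nonneg.2 hx₀)
  · linear_combination mul_nonneg (mul_pos hσ hγ).le (sq_nonneg (α * x₀ - μ))

end

/-- For α > γ > 0 and σ ≥ μ > 0, the map β ↦ −δ₁(β) is strictly increasing
on (σ/γ, ∞). -/
theorem neg_delta1_strictMonoOn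
    (μ σ α γ : ℝ) (hαγ : γ < α) (hγ : 0 < γ) (hμσ : μ ≤ σ) (hμ : 0 < μ) :
    StrictMonoOn (fun β : ℝ => -δ₁ μ σ α γ β) (Set.Ioi (σ / γ)) := by
  intro x hx y hy hxy
  simp only [neg_δ₁_eq_posRoot]
  calc posRoot (sβ μ σ α γ x) (cβ μ σ α γ x)
      < posRoot (sβ μ σ α γ x) (cβ μ σ α γ y) :=
        posRoot_lt_posRoot_right (cβ_nonneg hαγ hγ hμσ hμ hx) (cβ_lt_cβ hαγ hγ hμσ hμ hx hxy)
    _ ≤ posRoot (sβ μ σ α γ y) (cβ μ σ α γ y) :=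
        posRoot_le_posRoot_left (cβ_nonneg hαγ hγ hμσ hμ hy) (sβ_lt_sβ hαγ hγ hμσ hμ hx hxy).le
end

section
/- Let α > γ > 0 and σ ≥ μ > 0. Then for every β > σ/γ one has 0 < −δ₁(β) < √(μσ). In particular δ₁(β) < 0 for all β > σ/γ. -/
/-!
Put `a = a_β`, `b = b_β`, `S = μ a + σ b` and `P = a b (β²αγ − μσ)`. The radicand of `δ₁(β)`
is `S² + 4P`, so `−δ₁(β) = (√(S² + 4P) − S) / 2`. For `β > σ/γ` both `a` and `b` are positive,
hence `S, P > 0`, which gives `−δ₁(β) > 0`. Moreover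
`P = μσ · (βα − μ)(βγ − σ) / (β²αγ − μσ) < μσ`, and `√(S² + 4P) ≤ S + 2√P` then yields
`−δ₁(β) < √(μσ)`.
-/

open Real

lemma sqrt_sq_add_sub_pos (S : ℝ) {P : ℝ} (hP : 0 < P) : 0 < √(S ^ 2 + 4 * P) - S := by
  have : S < √(S ^ 2 + 4 * P) := by
    calc S ≤ |S| := le_abs_self S
      _ = √(S ^ 2) := (sqrt_sq_eq_abs S).symm
      _ < √(S ^ 2 + 4 * P) := sqrt_lt_sqrt (sq_nonneg S) (by linarith)
  linarith

lemma sqrt_sq_add_sub_lt {S P Q : ℝ} (hS : 0 ≤ S) (hP : 0 ≤ P) (hPQ : P < Q) :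
    √(S ^ 2 + 4 * P) - S < 2 * √Q := by
  have hle : √(S ^ 2 + 4 * P) ≤ S + 2 * √P := by
    rw [sqrt_le_left (by positivity)]
    nlinarith [sq_sqrt hP, sqrt_nonneg P]
  linarith [sqrt_lt_sqrt hP hPQ]

section PositiveEquilibrium

variable {μ σ α γ β : ℝ} (hμ : 0 < μ) (hσ : 0 < σ) (hμα : μ < β * α) (hσγ : σ < β * γ)
include hμ hσ hμα hσγ

lemma mul_lt_sq_mul_mul : μ * σ < β ^ 2 * α * γ := by
  nlinarith [mul_lt_mul'' hμα hσγ hμ.le hσ.le]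

lemma aβ_pos : 0 < aβ μ σ α γ β :=
  div_pos (mul_pos (sub_pos.mpr hμα) hσ) (sub_pos.mpr (mul_lt_sq_mul_mul hμ hσ hμα hσγ))

lemma bβ_pos : 0 < bβ μ σ α γ β :=
  div_pos (mul_pos (sub_pos.mpr hσγ) hμ) (sub_pos.mpr (mul_lt_sq_mul_mul hμ hσ hμα hσγ))

lemma aβ_mul_bβ_mul_sub_lt :
    aβ μ σ α γ β * bβ μ σ α γ β * (β ^ 2 * α * γ - μ * σ) < μ * σ := by
  have hD := sub_pos.mpr (mul_lt_sq_mul_mul hμ hσ hμα hσγ)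
  have hprod : aβ μ σ α γ β * bβ μ σ α γ β * (β ^ 2 * α * γ - μ * σ)
      = μ * σ * ((β * α - μ) * (β * γ - σ) / (β ^ 2 * α * γ - μ * σ)) := by
    unfold aβ bβ
    field_simp
  have hratio : (β * α - μ) * (β * γ - σ) / (β ^ 2 * α * γ - μ * σ) < 1 := by
    rw [div_lt_one hD]
    nlinarith [mul_pos hσ (sub_pos.mpr hμα), mul_pos hμ (sub_pos.mpr hσγ)]
  rw [hprod]
  exact mul_lt_of_lt_one_right (mul_pos hμ hσ) hratio

end PositiveEquilibrium

lemma neg_δ₁_eq (μ σ α γ β : ℝ) :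
    -δ₁ μ σ α γ β =
      (√((μ * aβ μ σ α γ β + σ * bβ μ σ α γ β) ^ 2
          + 4 * (aβ μ σ α γ β * bβ μ σ α γ β * (β ^ 2 * α * γ - μ * σ)))
        - (μ * aβ μ σ α γ β + σ * bβ μ σ α γ β)) / 2 := by
  unfold δ₁
  ring_nf

/-- For α > γ > 0, σ ≥ μ > 0 and every β > σ/γ, one has 0 < −δ₁(β) < √(μσ). -/
theorem neg_delta1_bounds
    (μ σ α γ : ℝ) (hαγ : γ < α) (hγ : 0 < γ) (hμσ : μ ≤ σ) (hμ : 0 < μ)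
    (β : ℝ) (hβ : σ / γ < β) :
    0 < -δ₁ μ σ α γ β ∧ -δ₁ μ σ α γ β < Real.sqrt (μ * σ) := by
  have hσ : 0 < σ := hμ.trans_le hμσ
  have hσγ : σ < β * γ := (div_lt_iff₀ hγ).mp hβ
  have hμα : μ < β * α := by nlinarith [(div_pos hσ hγ).trans hβ]
  have ha := aβ_pos hμ hσ hμα hσγ
  have hb := bβ_pos hμ hσ hμα hσγ
  have hP := mul_pos (mul_pos ha hb) (sub_pos.mpr (mul_lt_sq_mul_mul hμ hσ hμα hσγ))
  have hS := (add_pos (mul_pos hμ ha) (mul_pos hσ hb)).le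
  rw [neg_δ₁_eq]
  exact ⟨by linarith [sqrt_sq_add_sub_pos (μ * aβ μ σ α γ β + σ * bβ μ σ α γ β) hP],
    by linarith [sqrt_sq_add_sub_lt hS hP.le (aβ_mul_bβ_mul_sub_lt hμ hσ hμα hσγ)]⟩
end

section
/- Let α > γ > 0 and σ ≥ μ > 0. Then −δ₁(β) tends to √(μσ) as β → +∞, i.e. the function β ↦ −δ₁(β) converges to √(μσ) along the filter at infinity. -/
/-!
As `β → ∞`, `a_β ∼ σ / (γ β)` and `b_β ∼ μ / (α β)`. Hence the trace term `μ a_β + σ b_β`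
tends to `0`, while `4 β² α γ a_β b_β → 4 μ σ` dominates the discriminant, so
`-δ₁(β) → √(4 μ σ) / 2 = √(μ σ)`.
-/

open Filter Topology

theorem bβ_eq_aβ_swap (μ σ α γ : ℝ) : bβ μ σ α γ = aβ σ μ γ α := by
  ext β
  simp only [aβ, bβ]
  ring

theorem mul_aβ_eq {β : ℝ} (μ σ α γ : ℝ) (hβ : β ≠ 0) :
    β * aβ μ σ α γ β = (α - μ * β⁻¹) * σ / (α * γ - μ * σ * β⁻¹ ^ 2) := by
  rw [aβ, ← mul_div_assoc, ← mul_div_mul_left _ _ (pow_ne_zero 2 (inv_ne_zero hβ))]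
  congr 1 <;> field_simp

section Asymptotics

variable (μ σ : ℝ) {α γ : ℝ} (hα : α ≠ 0) (hγ : γ ≠ 0)
include hα hγ

theorem tendsto_mul_aβ_atTop : Tendsto (fun β => β * aβ μ σ α γ β) atTop (𝓝 (σ / γ)) := by
  have hcont : ContinuousAt (fun t : ℝ => (α - μ * t) * σ / (α * γ - μ * σ * t ^ 2)) 0 :=
    ContinuousAt.div (by fun_prop) (by fun_prop) (by simp [hα, hγ])
  have hlim := hcont.tendsto.comp tendsto_inv_atTop_zero
  rw [show (α - μ * 0) * σ / (α * γ - μ * σ * 0 ^ 2) = σ / γ by field_simp; ring] at hlim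
  refine hlim.congr' ?_
  filter_upwards [eventually_ne_atTop 0] with β hβ
  exact (mul_aβ_eq μ σ α γ hβ).symm

theorem tendsto_aβ_atTop : Tendsto (aβ μ σ α γ) atTop (𝓝 0) := by
  refine ((tendsto_mul_aβ_atTop μ σ hα hγ).div_atTop tendsto_id).congr' ?_
  filter_upwards [eventually_ne_atTop 0] with β hβ
  exact mul_div_cancel_left₀ _ hβ

theorem tendsto_mul_bβ_atTop : Tendsto (fun β => β * bβ μ σ α γ β) atTop (𝓝 (μ / α)) := by
  rw [bβ_eq_aβ_swap]
  exact tendsto_mul_aβ_atTop σ μ hγ hα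

theorem tendsto_bβ_atTop : Tendsto (bβ μ σ α γ) atTop (𝓝 0) := by
  rw [bβ_eq_aβ_swap]
  exact tendsto_aβ_atTop σ μ hγ hα

theorem tendsto_trace_atTop :
    Tendsto (fun β => μ * aβ μ σ α γ β + σ * bβ μ σ α γ β) atTop (𝓝 0) := by
  simpa using ((tendsto_aβ_atTop μ σ hα hγ).const_mul μ).add
    ((tendsto_bβ_atTop μ σ hα hγ).const_mul σ)

theorem tendsto_discriminant_atTop :
    Tendsto (fun β => 4 * β ^ 2 * α * γ * aβ μ σ α γ β * bβ μ σ α γ β +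
      (μ * aβ μ σ α γ β - σ * bβ μ σ α γ β) ^ 2) atTop (𝓝 (4 * (μ * σ))) := by
  convert (((tendsto_mul_aβ_atTop μ σ hα hγ).const_mul (4 * α * γ)).mul
      (tendsto_mul_bβ_atTop μ σ hα hγ)).add
    ((((tendsto_aβ_atTop μ σ hα hγ).const_mul μ).sub
      ((tendsto_bβ_atTop μ σ hα hγ).const_mul σ)).pow 2) using 2 with β
  · ring
  · field_simp
    ring

end Asymptotics

theorem neg_delta1_tendsto_sqrt_general
    (μ σ α γ : ℝ) (hαγ : γ < α) (hγ : 0 < γ) :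
    Filter.Tendsto (fun β : ℝ => -δ₁ μ σ α γ β) Filter.atTop
      (nhds (Real.sqrt (μ * σ))) := by
  have hα : α ≠ 0 := (hγ.trans hαγ).ne'
  have hlim := ((tendsto_discriminant_atTop μ σ hα hγ.ne').sqrt.sub
    (tendsto_trace_atTop μ σ hα hγ.ne')).const_mul (1 / 2)
  have hsqrt : √(4 * (μ * σ)) = 2 * √(μ * σ) := by
    rw [Real.sqrt_mul zero_le_four, show (4 : ℝ) = 2 ^ 2 by norm_num, Real.sqrt_sq zero_le_two]
  convert hlim using 2 with β
  · simp only [δ₁]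
    ring
  · rw [hsqrt]
    ring

/-- For α > γ > 0 and σ ≥ μ > 0, −δ₁(β) → √(μσ) as β → +∞. -/
theorem neg_delta1_tendsto_sqrt
    (μ σ α γ : ℝ) (hαγ : γ < α) (hγ : 0 < γ) (hμσ : μ ≤ σ) (hμ : 0 < μ) :
    Filter.Tendsto (fun β : ℝ => -δ₁ μ σ α γ β) Filter.atTop
      (nhds (Real.sqrt (μ * σ))) :=
  neg_delta1_tendsto_sqrt_general μ σ α γ hαγ hγ
end

section
/- Let α > γ > 0, σ ≥ μ > 0, λ > 0 and β ≥ σ/γ. Then −(λ + μ)β³αγ² + β²γμ(2γλ + σα) + βγμσ(μ − λ) − μ²σ² < 0. -/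
/-! With `b = βγ ≥ σ`, the negated polynomial splits as
`λ b (β²αγ - 2bμ + μσ) + μ (b - σ) (β²αγ - μσ)`.
Both brackets are positive because `β²αγ > b²`, and `b² - 2bμ + μσ ≥ (b - μ)²`, `b² ≥ σ² ≥ μσ`. -/

lemma neg_H_beta_eq (μ σ α γ lam β : ℝ) :
    -(-(lam + μ) * β ^ 3 * α * γ ^ 2 + β ^ 2 * γ * μ * (2 * γ * lam + σ * α) +
      β * γ * μ * σ * (μ - lam) - μ ^ 2 * σ ^ 2) =
      lam * (β * γ) * (β ^ 2 * α * γ - 2 * (β * γ) * μ + μ * σ) +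
        μ * (β * γ - σ) * (β ^ 2 * α * γ - μ * σ) := by
  ring

lemma sq_mul_lt_sq_mul_mul {α γ β : ℝ} (hβ : β ≠ 0) (hγ : 0 < γ) (hαγ : γ < α) :
    (β * γ) ^ 2 < β ^ 2 * α * γ := by
  have : 0 < β ^ 2 * γ * (α - γ) := by positivity [sub_pos.2 hαγ]
  nlinarith

lemma sq_sub_two_mul_add_mul_nonneg {b μ σ : ℝ} (hμ : 0 ≤ μ) (hμσ : μ ≤ σ) :
    0 ≤ b ^ 2 - 2 * b * μ + μ * σ := by
  nlinarith [sq_nonneg (b - μ), mul_le_mul_of_nonneg_left hμσ hμ]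

/-- For α > γ > 0, σ ≥ μ > 0, λ > 0 and β ≥ σ/γ,
−(λ + μ)β³αγ² + β²γμ(2γλ + σα) + βγμσ(μ − λ) − μ²σ² < 0. -/
theorem H_beta_neg
    (μ σ α γ lam β : ℝ) (hαγ : γ < α) (hγ : 0 < γ) (hμσ : μ ≤ σ) (hμ : 0 < μ)
    (hlam : 0 < lam) (hβ : σ / γ ≤ β) :
    -(lam + μ) * β ^ 3 * α * γ ^ 2 + β ^ 2 * γ * μ * (2 * γ * lam + σ * α) +
      β * γ * μ * σ * (μ - lam) - μ ^ 2 * σ ^ 2 < 0 := by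
  have hσb : σ ≤ β * γ := (div_le_iff₀ hγ).mp hβ
  have hb : 0 < β * γ := hμ.trans_le (hμσ.trans hσb)
  have hβ0 : β ≠ 0 := by rintro rfl; simp at hb
  have hsq := sq_mul_lt_sq_mul_mul hβ0 hγ hαγ
  have hP : 0 < β ^ 2 * α * γ - 2 * (β * γ) * μ + μ * σ := by
    linarith [sq_sub_two_mul_add_mul_nonneg (b := β * γ) hμ.le hμσ]
  have hQ : 0 ≤ β ^ 2 * α * γ - μ * σ := by
    have hσ : 0 ≤ σ := hμ.le.trans hμσ
    have : μ * σ < β ^ 2 * α * γ := calc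
      μ * σ ≤ σ * (β * γ) := mul_le_mul hμσ hσb hσ hσ
      _ ≤ (β * γ) ^ 2 := by rw [sq]; exact mul_le_mul_of_nonneg_right hσb hb.le
      _ < β ^ 2 * α * γ := hsq
    linarith
  have hpos : 0 < lam * (β * γ) * (β ^ 2 * α * γ - 2 * (β * γ) * μ + μ * σ) +
      μ * (β * γ - σ) * (β ^ 2 * α * γ - μ * σ) :=
    add_pos_of_pos_of_nonneg (by positivity) (by have := sub_nonneg.2 hσb; positivity)
  linarith [neg_H_beta_eq μ σ α γ lam β]
end

section
/- Let α > γ > 0, σ ≥ μ > 0 and β ≥ σ/γ. Then 4β⁴α²γ²(ασ + γμ) − 2β³αγμσ(α² + γ² + 10αγ) + 6β²αγμσ(α + γ)(μ + σ) − 2βμσ(μσ(α + γ)² + 2αγ(μ − σ)²) + 2μ²σ²(α − γ)(μ − σ) > 0. -/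
/-!
Multiplying by `β` and writing `x = β α`, `y = β γ` turns the polynomial into one that is
homogeneous in `x, y, μ, σ` with `μ ≤ σ ≤ y < x`. In the shifted variables `μ`, `σ - μ`,
`y - σ`, `x - y` every coefficient of the result is positive, and the monomial `μ³ (x - y)³`
does occur.
-/

theorem homogenized_pos {R : Type*} [CommRing R] [LinearOrder R] [IsStrictOrderedRing R]
    {x y μ σ : R} (hμ : 0 < μ) (hμσ : μ ≤ σ) (hσy : σ ≤ y) (hyx : y < x) :
    0 < 4 * x ^ 2 * y ^ 2 * (x * σ + y * μ) - 2 * x * y * μ * σ * (x ^ 2 + y ^ 2 + 10 * x * y) +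
        6 * x * y * μ * σ * (x + y) * (μ + σ) -
        2 * μ * σ * (μ * σ * (x + y) ^ 2 + 2 * x * y * (μ - σ) ^ 2) +
        2 * μ ^ 2 * σ ^ 2 * (x - y) * (μ - σ) := by
  obtain ⟨d, hd, rfl⟩ : ∃ d, 0 ≤ d ∧ σ = μ + d := ⟨σ - μ, sub_nonneg.2 hμσ, by ring⟩
  obtain ⟨e, he, rfl⟩ : ∃ e, 0 ≤ e ∧ y = μ + d + e := ⟨y - (μ + d), sub_nonneg.2 hσy, by ring⟩
  obtain ⟨a, ha, rfl⟩ : ∃ a, 0 < a ∧ x = μ + d + e + a := ⟨x - (μ + d + e), sub_pos.2 hyx, by ring⟩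
  ring_nf
  positivity

/-- For α > γ > 0, σ ≥ μ > 0 and β ≥ σ/γ, the polynomial h(β) is positive. -/
theorem h_beta_pos
    (μ σ α γ β : ℝ) (hαγ : γ < α) (hγ : 0 < γ) (hμσ : μ ≤ σ) (hμ : 0 < μ)
    (hβ : σ / γ ≤ β) :
    4 * β ^ 4 * α ^ 2 * γ ^ 2 * (α * σ + γ * μ) -
        2 * β ^ 3 * α * γ * μ * σ * (α ^ 2 + γ ^ 2 + 10 * α * γ) +
        6 * β ^ 2 * α * γ * μ * σ * (α + γ) * (μ + σ) -
        2 * β * μ * σ * (μ * σ * (α + γ) ^ 2 + 2 * α * γ * (μ - σ) ^ 2) +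
        2 * μ ^ 2 * σ ^ 2 * (α - γ) * (μ - σ) > 0 := by
  have hσβγ : σ ≤ β * γ := (div_le_iff₀ hγ).1 hβ
  have hβ_pos : 0 < β := lt_of_lt_of_le (div_pos (hμ.trans_le hμσ) hγ) hβ
  have key := homogenized_pos hμ hμσ hσβγ (mul_lt_mul_of_pos_left hαγ hβ_pos)
  refine pos_of_mul_pos_right (a := β) ?_ hβ_pos.le
  linear_combination key
end

section
/- Let α > γ > 0, σ ≥ μ > 0 and β ≥ σ/γ. Then (β²αγ + μσ)(α + γ) − 2βαγ(μ + σ) > 0. -/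
/-!
Put `t = β γ ≥ σ`. Then `γ` times the expression is the quadratic
`α (α + γ) t² - 2 α γ (μ + σ) t + μ σ γ (α + γ)`, whose vertex lies left of `σ` because
`γ μ ≤ α σ`. Its minimum over `t ≥ σ` is therefore its value at `σ`, which factors as
`σ (α - γ) (α σ - γ μ) > 0`.
-/

lemma quadratic_le_quadratic_of_vertex_le {a b s t : ℝ} (ha : 0 ≤ a) (hb : b ≤ a * s)
    (hst : s ≤ t) : a * s ^ 2 - 2 * b * s ≤ a * t ^ 2 - 2 * b * t := by
  have hfactor : a * t ^ 2 - 2 * b * t - (a * s ^ 2 - 2 * b * s)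
      = (t - s) * (a * (t - s) + 2 * (a * s - b)) := by ring
  have hts : 0 ≤ t - s := sub_nonneg.2 hst
  have hfactor_nonneg : 0 ≤ (t - s) * (a * (t - s) + 2 * (a * s - b)) :=
    mul_nonneg hts (add_nonneg (mul_nonneg ha hts) (by linarith))
  linarith

/-- For α > γ > 0, σ ≥ μ > 0 and β ≥ σ/γ,
(β²αγ + μσ)(α + γ) − 2βαγ(μ + σ) > 0. -/
theorem quadratic_pos
    (μ σ α γ β : ℝ) (hαγ : γ < α) (hγ : 0 < γ) (hμσ : μ ≤ σ) (hμ : 0 < μ)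
    (hβ : σ / γ ≤ β) :
    (β ^ 2 * α * γ + μ * σ) * (α + γ) - 2 * β * α * γ * (μ + σ) > 0 := by
  have hα : 0 < α := hγ.trans hαγ
  have hσ : 0 < σ := hμ.trans_le hμσ
  have ht : σ ≤ β * γ := (div_le_iff₀ hγ).mp hβ
  have hγμ : γ * μ < α * σ := by nlinarith
  have hvertex : α * γ * (μ + σ) ≤ α * (α + γ) * σ := by nlinarith
  have hmono := quadratic_le_quadratic_of_vertex_le (by positivity) hvertex ht
  have key : 0 < γ * ((β ^ 2 * α * γ + μ * σ) * (α + γ) - 2 * β * α * γ * (μ + σ)) :=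
    calc 0 < σ * (α - γ) * (α * σ - γ * μ) :=
          mul_pos (mul_pos hσ (sub_pos.2 hαγ)) (sub_pos.2 hγμ)
      _ = α * (α + γ) * σ ^ 2 - 2 * (α * γ * (μ + σ)) * σ + μ * σ * γ * (α + γ) := by ring
      _ ≤ α * (α + γ) * (β * γ) ^ 2 - 2 * (α * γ * (μ + σ)) * (β * γ)
            + μ * σ * γ * (α + γ) := add_le_add_left hmono _
      _ = γ * ((β ^ 2 * α * γ + μ * σ) * (α + γ) - 2 * β * α * γ * (μ + σ)) := by ring
  exact pos_of_mul_pos_right key hγ.le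
end

section
/- Let α > γ > 0 and σ ≥ μ > 0. Then the function β ↦ β·(α b_β + γ a_β) is strictly increasing on the interval (σ/γ, +∞). -/
theorem strictMonoOn_mul_sub_div_sq_sub {A B C D : ℝ} {s : Set ℝ}
    (hden : ∀ x ∈ s, 0 < C * x ^ 2 - D)
    (hcross : ∀ x ∈ s, ∀ y ∈ s, x < y → 0 < B * C * x * y - A * D * (x + y) + B * D) :
    StrictMonoOn (fun x => x * (A * x - B) / (C * x ^ 2 - D)) s := by
  intro x hx y hy hxy
  rw [div_lt_div_iff₀ (hden x hx) (hden y hy)]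
  linear_combination mul_pos (sub_pos.2 hxy) (hcross x hx y hy hxy)

theorem beta_mul_sum_eq (μ σ α γ β : ℝ) :
    β * (α * bβ μ σ α γ β + γ * aβ μ σ α γ β) =
      β * (α * γ * (μ + σ) * β - μ * σ * (α + γ)) / (α * γ * β ^ 2 - μ * σ) := by
  rw [show α * γ * β ^ 2 - μ * σ = β ^ 2 * α * γ - μ * σ by ring]
  unfold aβ bβ
  simp only [mul_div_assoc', ← add_div]
  congr 1
  ring

theorem mul_sq_sub_mul_pos_of_div_lt {μ σ α γ β : ℝ} (hγα : γ ≤ α) (hγ : 0 < γ) (hμσ : μ ≤ σ)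
    (hσ : 0 < σ) (hβ : σ / γ < β) : 0 < α * γ * β ^ 2 - μ * σ := by
  rw [div_lt_iff₀ hγ] at hβ
  have hαβ : σ < α * β := by nlinarith
  have hσσ : σ * σ < α * β * (β * γ) := mul_lt_mul'' hαβ hβ hσ.le hσ.le
  linear_combination hσσ + mul_le_mul_of_nonneg_right hμσ hσ.le

theorem cross_term_pos_of_div_lt {μ σ α γ x y : ℝ} (hγα : γ < α) (hγ : 0 < γ) (hμσ : μ ≤ σ)
    (hσ : 0 < σ) (hx : σ / γ < x) (hy : σ / γ < y) :
    0 < α * γ * (α + γ) * x * y - α * γ * (μ + σ) * (x + y) + μ * σ * (α + γ) := by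
  rw [div_lt_iff₀ hγ] at hx hy
  have hα : 0 < α := hγ.trans hγα
  have hαγ : 0 < α - γ := sub_pos.2 hγα
  have hgap : 0 < α * σ - γ * μ := by nlinarith
  have hu : 0 < x * γ - σ := by linarith
  have hv : 0 < y * γ - σ := by linarith
  have key : γ * (α * γ * (α + γ) * x * y - α * γ * (μ + σ) * (x + y) + μ * σ * (α + γ)) =
      σ * (α - γ) * (α * σ - γ * μ) + α * (α * σ - γ * μ) * ((x * γ - σ) + (y * γ - σ))
        + α * (α + γ) * (x * γ - σ) * (y * γ - σ) := by ring
  exact pos_of_mul_pos_right (key ▸ by positivity) hγ.le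

/-- For α > γ > 0 and σ ≥ μ > 0, the map β ↦ β(α b_β + γ a_β) is strictly
increasing on (σ/γ, ∞). -/
theorem beta_mul_sum_strictMonoOn
    (μ σ α γ : ℝ) (hαγ : γ < α) (hγ : 0 < γ) (hμσ : μ ≤ σ) (hμ : 0 < μ) :
    StrictMonoOn (fun β : ℝ => β * (α * bβ μ σ α γ β + γ * aβ μ σ α γ β))
      (Set.Ioi (σ / γ)) := by
  have hσ : 0 < σ := hμ.trans_le hμσ
  refine StrictMonoOn.congr ?_ (fun β _ => (beta_mul_sum_eq μ σ α γ β).symm)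
  refine strictMonoOn_mul_sub_div_sq_sub
    (fun β hβ => mul_sq_sub_mul_pos_of_div_lt hαγ.le hγ hμσ hσ hβ) ?_
  intro x hx y hy _
  linear_combination mul_pos (mul_pos hμ hσ) (cross_term_pos_of_div_lt hαγ hγ hμσ hσ hx hy)
end

section
/- Let α > γ > 0, σ ≥ μ > 0 and β > σ/γ. Then δ₂(β, 1) = −δ₁(β), i.e. the two-variable quantity δ₂(β, λ) evaluated at λ = 1 equals the negative of the one-variable quantity δ₁(β) = (1/2)·(μ a_β + σ b_β − √(4β²αγ a_β b_β + (μ a_β − σ b_β)²)). -/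
/-- The smaller eigenvalue `δ₁(β, λ)` of the matrix `D(β, λ)` (times λ). -/
noncomputable def delta₁ (μ σ α γ β lam : ℝ) : ℝ :=
  (1 / (2 * lam)) * (-(μ * lam) + β * α * bβ μ σ α γ β - σ * lam + β * γ * aβ μ σ α γ β -
    Real.sqrt ((μ * lam - β * α * bβ μ σ α γ β + σ * lam - β * γ * aβ μ σ α γ β) ^ 2 -
      4 * (μ * σ * lam ^ 2 - β * α * bβ μ σ α γ β * σ * lam -
        β * γ * aβ μ σ α γ β * μ * lam)))

/-- The larger eigenvalue `δ₂(β, λ)` of the matrix `D(β, λ)` (times λ). -/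
noncomputable def delta₂ (μ σ α γ β lam : ℝ) : ℝ :=
  (1 / (2 * lam)) * (-(μ * lam) + β * α * bβ μ σ α γ β - σ * lam + β * γ * aβ μ σ α γ β +
    Real.sqrt ((μ * lam - β * α * bβ μ σ α γ β + σ * lam - β * γ * aβ μ σ α γ β) ^ 2 -
      4 * (μ * σ * lam ^ 2 - β * α * bβ μ σ α γ β * σ * lam -
        β * γ * aβ μ σ α γ β * μ * lam)))

/-! The formulas for `a_β, b_β` are the solution of the linear system `μ a + βα b = μ`,
`βγ a + σ b = σ`, which is uniquely solvable because `β²αγ > μσ`. At `λ = 1` these two relations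
turn the linear part of `δ₂(β, 1)` into `-(μ a_β + σ b_β)` and make its radicand equal to that of
`δ₁(β)`. -/

section

variable {μ σ α γ β : ℝ}

theorem μ_mul_aβ_add_mul_bβ (hD : β ^ 2 * α * γ - μ * σ ≠ 0) :
    μ * aβ μ σ α γ β + β * α * bβ μ σ α γ β = μ := by
  unfold aβ bβ
  rw [mul_div_assoc', mul_div_assoc', ← add_div, div_eq_iff hD]
  ring

theorem mul_aβ_add_σ_mul_bβ (hD : β ^ 2 * α * γ - μ * σ ≠ 0) :
    β * γ * aβ μ σ α γ β + σ * bβ μ σ α γ β = σ := by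
  unfold aβ bβ
  rw [mul_div_assoc', mul_div_assoc', ← add_div, div_eq_iff hD]
  ring

theorem μ_mul_σ_lt_β_sq_mul_α_mul_γ (hαγ : γ < α) (hγ : 0 < γ) (hμσ : μ ≤ σ) (hμ : 0 < μ)
    (hβ : σ / γ < β) : μ * σ < β ^ 2 * α * γ := by
  have hσ : 0 < σ := hμ.trans_le hμσ
  have hβγ : σ < β * γ := (div_lt_iff₀ hγ).mp hβ
  have hβα : μ < β * α := by
    have hβ₀ : 0 < β := (div_pos hσ hγ).trans hβ
    nlinarith
  calc μ * σ < β * α * (β * γ) := mul_lt_mul'' hβα hβγ hμ.le hσ.le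
    _ = β ^ 2 * α * γ := by ring

theorem delta₂_one_eq_neg_δ₁ (hD : β ^ 2 * α * γ - μ * σ ≠ 0) :
    delta₂ μ σ α γ β 1 = -δ₁ μ σ α γ β := by
  have h₁ := μ_mul_aβ_add_mul_bβ hD
  have h₂ := mul_aβ_add_σ_mul_bβ hD
  unfold delta₂ δ₁
  set a := aβ μ σ α γ β
  set b := bβ μ σ α γ β
  have hrad : (μ * 1 - β * α * b + σ * 1 - β * γ * a) ^ 2 -
      4 * (μ * σ * 1 ^ 2 - β * α * b * σ * 1 - β * γ * a * μ * 1) =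
      4 * β ^ 2 * α * γ * a * b + (μ * a - σ * b) ^ 2 := by
    linear_combination (μ * a - σ * b + μ - σ - β * α * b + β * γ * a) * (h₂ - h₁)
  rw [hrad]
  linear_combination (1 / 2) * h₁ + (1 / 2) * h₂

end

/-- For α > γ > 0, σ ≥ μ > 0 and β > σ/γ, one has δ₂(β, 1) = −δ₁(β). -/
theorem delta2_at_one_eq_neg_delta1
    (μ σ α γ β : ℝ) (hαγ : γ < α) (hγ : 0 < γ) (hμσ : μ ≤ σ) (hμ : 0 < μ)
    (hβ : σ / γ < β) :
    delta₂ μ σ α γ β 1 = -δ₁ μ σ α γ β :=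
  delta₂_one_eq_neg_δ₁ (sub_ne_zero.mpr (μ_mul_σ_lt_β_sq_mul_α_mul_γ hαγ hγ hμσ hμ hβ).ne')
end

section
/- Let N ≥ 2, α > γ > 0, μ > 0 and β > μ/γ (so that β²αγ > μ²), and set a_β = (βα − μ)μ/(β²αγ − μ²), b_β = (βγ − μ)μ/(β²αγ − μ²). Let (w₁, w₂) be a pair of functions, twice continuously differentiable on the closed unit ball of ℝ^N and radially symmetric (each w_i(x) depends only on ‖x‖), satisfying −Δw₁ = (w₁ + a_β)(−μ w₁ − βα w₂) and −Δw₂ = (w₂ + b_β)(−μ w₂ − βγ w₁) in the open unit ball B₁, together with the Neumann boundary condition ⟨∇w_i(x), x⟩ = 0 for ‖x‖ = 1. Define v = (βγ − μ)·w₁ − (βα − μ)·w₂. Then either v is identically zero on the closed unit ball, or every zero of v in the punctured open ball is simple: for every x with 0 < ‖x‖ < 1 and v(x) = 0 one has ∇v(x) ≠ 0. -/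
open Metric MeasureTheory RealInnerProductSpace

/-- The Laplacian of a real-valued function on Euclidean space, as the sum of the pure
second derivatives along the standard orthonormal basis directions. -/
noncomputable def lap {N : ℕ} (u : EuclideanSpace ℝ (Fin N) → ℝ)
    (x : EuclideanSpace ℝ (Fin N)) : ℝ :=
  ∑ i : Fin N, iteratedFDeriv ℝ 2 u x ![EuclideanSpace.single i 1, EuclideanSpace.single i 1]

/-!
Write `p = βγ - μ`, `q = βα - μ`, `D = β²αγ - μ²`. Since `a_β = qμ/D` and `b_β = pμ/D`, the
nonlinearities combine exactly, and `v = p w₁ - q w₂` solves the *linear* equation `Δv = V v` with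
`V = μ (w₁ + w₂) - pqμ/D`. For radial `v` with profile `g` this is the ODE
`g'' + (N - 1)/r g' = V g` on `(0, 1)`, whose coefficients are continuous there. At a degenerate
zero `r₀ = ‖x₀‖` we have `g r₀ = g' r₀ = 0`, so uniqueness for linear ODEs gives `g = 0` on
`(0, 1)`, and then on `[0, 1]` by continuity.
-/

open Filter Topology Set NNReal Laplacian

theorem ContDiffAt.differentiableAt_deriv {g : ℝ → ℝ} {t : ℝ} (hg : ContDiffAt ℝ 2 g t) :
    DifferentiableAt ℝ (deriv g) t :=
  (hg.derivWithin (m := 1) (by norm_num)).differentiableAt one_ne_zero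

theorem deriv_deriv_comp {g φ : ℝ → ℝ} {t : ℝ} (hg : ContDiffAt ℝ 2 g (φ t))
    (hφ : ContDiffAt ℝ 2 φ t) :
    deriv (deriv (g ∘ φ)) t =
      deriv (deriv g) (φ t) * deriv φ t ^ 2 + deriv g (φ t) * deriv (deriv φ) t := by
  have hchain : deriv (g ∘ φ) =ᶠ[𝓝 t] fun s => deriv g (φ s) * deriv φ s := by
    filter_upwards [hφ.eventually (by simp), hφ.continuousAt.eventually (hg.eventually (by simp))]
      with s hφs hgs
    exact deriv_comp s (hgs.differentiableAt two_ne_zero) (hφs.differentiableAt two_ne_zero)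
  have hprod : HasDerivAt (fun s => deriv g (φ s) * deriv φ s)
      (deriv (deriv g) (φ t) * deriv φ t * deriv φ t + deriv g (φ t) * deriv (deriv φ) t) t :=
    (hg.differentiableAt_deriv.hasDerivAt.comp t
      (hφ.differentiableAt two_ne_zero).hasDerivAt).mul hφ.differentiableAt_deriv.hasDerivAt
  rw [hchain.deriv_eq, hprod.deriv]
  ring

theorem lipschitzWith_companion {p q : ℝ} {M : ℝ≥0} (hp : |p| ≤ M) (hq : |q| ≤ M) :
    LipschitzWith (1 + 2 * M) fun y : ℝ × ℝ => (y.2, p * y.2 + q * y.1) := by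
  refine LipschitzWith.of_dist_le_mul fun y z => ?_
  have h1 : |y.1 - z.1| ≤ dist y z := by
    rw [Prod.dist_eq, ← Real.dist_eq]; exact le_max_left _ _
  have h2 : |y.2 - z.2| ≤ dist y z := by
    rw [Prod.dist_eq, ← Real.dist_eq]; exact le_max_right _ _
  have hM : (0 : ℝ) ≤ M := M.2
  push_cast
  rw [Prod.dist_eq, Real.dist_eq, Real.dist_eq]
  refine max_le (by nlinarith [dist_nonneg (x := y) (y := z)]) ?_
  calc |p * y.2 + q * y.1 - (p * z.2 + q * z.1)| = |p * (y.2 - z.2) + q * (y.1 - z.1)| := by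
        ring_nf
    _ ≤ |p| * |y.2 - z.2| + |q| * |y.1 - z.1| := by
        simpa only [abs_mul] using abs_add_le (p * (y.2 - z.2)) (q * (y.1 - z.1))
    _ ≤ M * dist y z + M * dist y z := by gcongr
    _ ≤ (1 + 2 * M) * dist y z := by nlinarith [dist_nonneg (x := y) (y := z)]

theorem eqOn_zero_of_deriv_deriv_eq {P Q g : ℝ → ℝ} {a b t₀ : ℝ}
    (hg : ContDiffOn ℝ 2 g (Ioo a b)) (hP : ContinuousOn P (Ioo a b))
    (hQ : ContinuousOn Q (Ioo a b))
    (hode : ∀ t ∈ Ioo a b, deriv (deriv g) t = P t * deriv g t + Q t * g t)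
    (ht₀ : t₀ ∈ Ioo a b) (h0 : g t₀ = 0) (h1 : deriv g t₀ = 0) : EqOn g 0 (Ioo a b) := by
  intro t ht
  -- On a compact `[c, d] ∋ t₀, t` the coefficients are bounded, so the first-order system for
  -- `(g, g')` is Lipschitz there.
  obtain ⟨c, hac, hc⟩ := exists_between (lt_min ht₀.1 ht.1)
  obtain ⟨d, hd, hdb⟩ := exists_between (max_lt ht₀.2 ht.2)
  have hsub : Icc c d ⊆ Ioo a b := Icc_subset_Ioo hac hdb
  obtain ⟨C, hC⟩ := isCompact_Icc.exists_bound_of_continuousOn ((hP.prodMk hQ).mono hsub)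
  have hPQ : ∀ s ∈ Icc c d, |P s| ≤ C.toNNReal ∧ |Q s| ≤ C.toNNReal := fun s hs =>
    have h := (hC s hs).trans (Real.le_coe_toNNReal C)
    ⟨(norm_fst_le (P s, Q s)).trans h, (norm_snd_le (P s, Q s)).trans h⟩
  have hgC : ∀ s ∈ Ioo a b, ContDiffAt ℝ 2 g s := fun s hs =>
    hg.contDiffAt (isOpen_Ioo.mem_nhds hs)
  have huniq := ODE_solution_unique_of_mem_Icc (s := fun _ => univ) (t₀ := t₀)
    (v := fun s y => (y.2, P s * y.2 + Q s * y.1)) (f := fun s => (g s, deriv g s))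
    (g := fun _ => 0)
    (fun s hs => (lipschitzWith_companion (hPQ s (Ioo_subset_Icc_self hs)).1
      (hPQ s (Ioo_subset_Icc_self hs)).2).lipschitzOnWith)
    ⟨hc.trans_le (min_le_left _ _), (le_max_left _ _).trans_lt hd⟩
    (fun s hs => ((hgC s (hsub hs)).continuousAt.prodMk
      (hgC s (hsub hs)).differentiableAt_deriv.continuousAt).continuousWithinAt)
    (fun s hs => by
      have hs' := hsub (Ioo_subset_Icc_self hs)
      rw [← hode s hs']
      exact ((hgC s hs').differentiableAt two_ne_zero).hasDerivAt.prodMk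
        (hgC s hs').differentiableAt_deriv.hasDerivAt)
    (fun _ _ => mem_univ _) continuousOn_const
    (fun s _ => by simpa [← Prod.zero_eq_mk] using hasDerivAt_const s (0 : ℝ × ℝ))
    (fun _ _ => mem_univ _)
    (by simp [h0, h1])
  exact congrArg Prod.fst (huniq ⟨hc.le.trans (min_le_right _ _), (le_max_right _ _).trans hd.le⟩)

section InnerProductSpace

variable {E : Type*} [NormedAddCommGroup E] [InnerProductSpace ℝ E]

theorem hasDerivAt_norm_add_smul {x u : E} {t : ℝ} (h : x + t • u ≠ 0) :
    HasDerivAt (fun s : ℝ => ‖x + s • u‖) (⟪x + t • u, u⟫ / ‖x + t • u‖) t := by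
  have hline : HasDerivAt (fun s : ℝ => x + s • u) u t := by
    simpa using ((hasDerivAt_id t).smul_const u).const_add x
  have := hline.norm_sq.sqrt (by positivity)
  simp only [Real.sqrt_sq (norm_nonneg _)] at this
  convert this using 1
  ring

theorem deriv_deriv_norm_add_smul {x : E} (hx : x ≠ 0) (u : E) :
    deriv (deriv fun t : ℝ => ‖x + t • u‖) 0 = ‖u‖ ^ 2 / ‖x‖ - ⟪x, u⟫ ^ 2 / ‖x‖ ^ 3 := by
  have hev : deriv (fun t : ℝ => ‖x + t • u‖) =ᶠ[𝓝 0]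
      fun t => ⟪x + t • u, u⟫ / ‖x + t • u‖ := by
    have hcont : Continuous fun t : ℝ => x + t • u := by fun_prop
    filter_upwards [hcont.continuousAt.eventually_ne (by simpa using hx)] with t ht
    exact (hasDerivAt_norm_add_smul ht).deriv
  have hline : HasDerivAt (fun s : ℝ => x + s • u) u 0 := by
    simpa using ((hasDerivAt_id (0 : ℝ)).smul_const u).const_add x
  have hnum := hline.inner (𝕜 := ℝ) (hasDerivAt_const 0 u)
  have hden := hasDerivAt_norm_add_smul (t := 0) (u := u) (by simpa using hx)
  have hquot : HasDerivAt (fun t : ℝ => ⟪x + t • u, u⟫ / ‖x + t • u‖) _ 0 :=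
    hnum.div hden (by simpa using hx)
  rw [hev.deriv_eq, hquot.deriv]
  simp only [zero_smul, add_zero, inner_zero_right, real_inner_self_eq_norm_sq]
  field_simp
  ring

theorem iteratedFDeriv_two_apply_eq_deriv_deriv_line {f : E → ℝ} {x : E}
    (hf : ContDiffAt ℝ 2 f x) (u : E) :
    iteratedFDeriv ℝ 2 f x ![u, u] = deriv (deriv fun t : ℝ => f (x + t • u)) 0 := by
  have hline : ∀ t : ℝ, HasDerivAt (fun s : ℝ => x + s • u) u t := fun t => by
    simpa using ((hasDerivAt_id t).smul_const u).const_add x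
  have hcont : ContinuousAt (fun t : ℝ => x + t • u) 0 := (hline 0).continuousAt
  have hev : deriv (fun t : ℝ => f (x + t • u)) =ᶠ[𝓝 0] fun t => fderiv ℝ f (x + t • u) u := by
    filter_upwards [hcont.eventually (by simpa using hf.eventually (by simp))] with t ht
    exact ((ht.differentiableAt two_ne_zero).hasFDerivAt.comp_hasDerivAt t (hline t)).deriv
  have hf' : HasFDerivAt (fderiv ℝ f) (fderiv ℝ (fderiv ℝ f) x) (x + (0 : ℝ) • u) := by
    simpa using
      ((hf.fderiv_right (m := 1) (by norm_num)).differentiableAt one_ne_zero).hasFDerivAt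
  have hd : HasDerivAt (fun t : ℝ => fderiv ℝ f (x + t • u) u) (fderiv ℝ (fderiv ℝ f) x u u) 0 :=
    (ContinuousLinearMap.apply ℝ ℝ u).hasFDerivAt.comp_hasDerivAt 0
      (hf'.comp_hasDerivAt 0 (hline 0))
  rw [hev.deriv_eq, hd.deriv, iteratedFDeriv_two_apply]
  simp

theorem laplacian_comp_norm [FiniteDimensional ℝ E] {g : ℝ → ℝ} {x : E} (hx : x ≠ 0)
    (hg : ContDiffAt ℝ 2 g ‖x‖) :
    Δ (fun y : E => g ‖y‖) x =
      deriv (deriv g) ‖x‖ + (Module.finrank ℝ E - 1) / ‖x‖ * deriv g ‖x‖ := by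
  set b := stdOrthonormalBasis ℝ E
  have hdir : ∀ i, iteratedFDeriv ℝ 2 (fun y => g ‖y‖) x ![b i, b i] =
      deriv (deriv g) ‖x‖ * (⟪x, b i⟫ / ‖x‖) ^ 2 +
        deriv g ‖x‖ * (1 / ‖x‖ - ⟪x, b i⟫ ^ 2 / ‖x‖ ^ 3) := by
    intro i
    have hx' : x + (0 : ℝ) • b i ≠ 0 := by simpa using hx
    have hφ : ContDiffAt ℝ 2 (fun t : ℝ => ‖x + t • b i‖) 0 :=
      (contDiffAt_norm ℝ hx').comp 0 (by fun_prop)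
    have hgn : ContDiffAt ℝ 2 (fun y : E => g ‖y‖) x := hg.comp x (contDiffAt_norm ℝ hx)
    rw [iteratedFDeriv_two_apply_eq_deriv_deriv_line hgn,
      show (fun t : ℝ => g ‖x + t • b i‖) = g ∘ fun t => ‖x + t • b i‖ from rfl,
      deriv_deriv_comp (by simpa using hg) hφ, (hasDerivAt_norm_add_smul hx').deriv,
      deriv_deriv_norm_add_smul hx, b.norm_eq_one]
    simp
  rw [InnerProductSpace.laplacian_eq_iteratedFDeriv_orthonormalBasis _ b]
  simp only [hdir, Finset.sum_add_distrib, ← Finset.mul_sum, div_pow, ← Finset.sum_div,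
    Finset.sum_sub_distrib, b.sum_sq_inner_left, Finset.sum_const, Finset.card_univ,
    Fintype.card_fin, nsmul_eq_mul]
  field_simp

def RadialOn {F : Type*} (f : E → F) (s : Set E) : Prop :=
  ∀ x ∈ s, ∀ y ∈ s, ‖x‖ = ‖y‖ → f x = f y

theorem RadialOn.eq_norm_smul {F : Type*} {f : E → F} {R : ℝ}
    (hf : RadialOn f (closedBall 0 R)) {e x : E} (he : ‖e‖ = 1) (hx : x ∈ closedBall 0 R) :
    f x = f (‖x‖ • e) :=
  hf x hx _ (by simpa [norm_smul, he] using hx) (by simp [norm_smul, he])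

theorem RadialOn.laplacian_eq {v : E → ℝ} {R : ℝ} [FiniteDimensional ℝ E]
    (hrad : RadialOn v (closedBall 0 R)) (hv : ContDiffOn ℝ 2 v (ball 0 R)) {e : E}
    (he : ‖e‖ = 1) {t : ℝ} (ht : t ∈ Ioo 0 R) :
    Δ v (t • e) = deriv (deriv fun s : ℝ => v (s • e)) t +
      (Module.finrank ℝ E - 1) / t * deriv (fun s : ℝ => v (s • e)) t := by
  have hnorm : ‖t • e‖ = t := by simp [norm_smul, he, abs_of_pos ht.1]
  have hball : t • e ∈ ball 0 R := by simpa [hnorm] using ht.2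
  have hprofile : v =ᶠ[𝓝 (t • e)] fun y => v (‖y‖ • e) := by
    filter_upwards [isOpen_ball.mem_nhds hball] with y hy
    exact hrad.eq_norm_smul he (ball_subset_closedBall hy)
  have hg : ContDiffAt ℝ 2 (fun s : ℝ => v (s • e)) ‖t • e‖ :=
    (hv.contDiffAt (isOpen_ball.mem_nhds (by rwa [hnorm]))).comp _ (by fun_prop)
  have hne : t • e ≠ 0 := by rw [← norm_pos_iff, hnorm]; exact ht.1
  rw [(InnerProductSpace.laplacian_congr_nhds hprofile).eq_of_nhds, laplacian_comp_norm hne hg,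
    hnorm]

theorem RadialOn.eqOn_zero_of_laplacian_eq_mul [FiniteDimensional ℝ E] {v V : E → ℝ} {R : ℝ}
    (hrad : RadialOn v (closedBall 0 R)) (hv : ContDiffOn ℝ 2 v (ball 0 R))
    (hvc : ContinuousOn v (closedBall 0 R)) (hV : ContinuousOn V (ball 0 R))
    (hΔ : ∀ x ∈ ball 0 R, Δ v x = V x * v x) {x₀ : E} (hx₀ : x₀ ≠ 0) (hx₀R : x₀ ∈ ball 0 R)
    (hvx₀ : v x₀ = 0) (hgrad : gradient v x₀ = 0) : EqOn v 0 (closedBall 0 R) := by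
  set e : E := ‖x₀‖⁻¹ • x₀
  have he : ‖e‖ = 1 := norm_smul_inv_norm hx₀
  have hx₀e : ‖x₀‖ • e = x₀ := by simp [e, smul_smul, norm_ne_zero_iff.mpr hx₀]
  set g : ℝ → ℝ := fun t => v (t • e)
  have hr₀ : ‖x₀‖ ∈ Ioo 0 R := ⟨norm_pos_iff.mpr hx₀, mem_ball_zero_iff.mp hx₀R⟩
  have hmaps : MapsTo (· • e) (Icc 0 R) (closedBall 0 R) := fun t ht => by
    simpa [norm_smul, he, abs_of_nonneg ht.1] using ht.2
  have hmaps' : MapsTo (· • e) (Ioo 0 R) (ball 0 R) := fun t ht => by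
    simpa [norm_smul, he, abs_of_pos ht.1] using ht.2
  have hg : ContDiffOn ℝ 2 g (Ioo 0 R) := hv.comp (by fun_prop) hmaps'
  have hode : ∀ t ∈ Ioo 0 R,
      deriv (deriv g) t = -((Module.finrank ℝ E - 1) / t) * deriv g t + V (t • e) * g t :=
      fun t ht => by
    linear_combination (hrad.laplacian_eq hv he ht).symm.trans (hΔ _ (hmaps' ht))
  have hP : ContinuousOn (fun t : ℝ => -((Module.finrank ℝ E - 1) / t)) (Ioo 0 R) :=
    (continuousOn_const.div continuousOn_id fun t ht => ht.1.ne').neg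
  have hder : HasDerivAt g 0 ‖x₀‖ := by
    have hfd : HasFDerivAt v (0 : E →L[ℝ] ℝ) (‖x₀‖ • e) := by
      rw [hx₀e]
      simpa [hgrad] using ((hv.differentiableOn (by norm_num)).differentiableAt
        (isOpen_ball.mem_nhds hx₀R)).hasGradientAt.hasFDerivAt
    have hline : HasDerivAt (fun t : ℝ => t • e) e ‖x₀‖ := by
      simpa using (hasDerivAt_id ‖x₀‖).smul_const e
    exact hfd.comp_hasDerivAt ‖x₀‖ hline
  have hzero : EqOn g 0 (Ioo 0 R) := eqOn_zero_of_deriv_deriv_eq hg hP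
    (hV.comp (by fun_prop) hmaps') hode hr₀ (by simpa [g, hx₀e] using hvx₀) hder.deriv
  have hzero' : EqOn g 0 (Icc 0 R) := hzero.of_subset_closure (hvc.comp (by fun_prop) hmaps)
    continuousOn_const Ioo_subset_Icc_self (closure_Ioo (hr₀.1.trans hr₀.2).ne).ge
  intro x hx
  rw [hrad.eq_norm_smul he hx]
  exact hzero' ⟨norm_nonneg x, mem_closedBall_zero_iff.mp hx⟩

theorem laplacian_combination_eq_mul [FiniteDimensional ℝ E] {w₁ w₂ : E → ℝ} {x : E}
    {μ α γ β : ℝ} (h₁ : ContDiffAt ℝ 2 w₁ x) (h₂ : ContDiffAt ℝ 2 w₂ x)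
    (heq₁ : -Δ w₁ x = (w₁ x + (β * α - μ) * μ / (β ^ 2 * α * γ - μ ^ 2)) *
      (-(μ * w₁ x) - β * α * w₂ x))
    (heq₂ : -Δ w₂ x = (w₂ x + (β * γ - μ) * μ / (β ^ 2 * α * γ - μ ^ 2)) *
      (-(μ * w₂ x) - β * γ * w₁ x)) :
    Δ (fun y => (β * γ - μ) * w₁ y - (β * α - μ) * w₂ y) x =
      (μ * (w₁ x + w₂ x) - (β * γ - μ) * (β * α - μ) * μ / (β ^ 2 * α * γ - μ ^ 2)) *
        ((β * γ - μ) * w₁ x - (β * α - μ) * w₂ x) := by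
  have h₁' : ContDiffAt ℝ 2 ((β * γ - μ) • w₁) x := h₁.const_smul (β * γ - μ)
  have h₂' : ContDiffAt ℝ 2 ((β * α - μ) • w₂) x := h₂.const_smul (β * α - μ)
  have hsplit : Δ ((β * γ - μ) • w₁ - (β * α - μ) • w₂) x =
      (β * γ - μ) * Δ w₁ x - (β * α - μ) * Δ w₂ x := by
    rw [h₁'.laplacian_sub h₂', InnerProductSpace.laplacian_smul _ h₁,
      InnerProductSpace.laplacian_smul _ h₂, smul_eq_mul, smul_eq_mul]
  linear_combination hsplit - (β * γ - μ) * heq₁ + (β * α - μ) * heq₂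

end InnerProductSpace

theorem lap_eq_laplacian {N : ℕ} (u : EuclideanSpace ℝ (Fin N) → ℝ) : lap u = Δ u := by
  ext x
  simp [lap, InnerProductSpace.laplacian_eq_iteratedFDeriv_orthonormalBasis u
    (EuclideanSpace.basisFun (Fin N) ℝ)]

theorem combination_zero_or_simple_roots_general
    {N : ℕ} (μ α γ β : ℝ)
    (w₁ w₂ : EuclideanSpace ℝ (Fin N) → ℝ)
    (hreg₁ : ContDiffOn ℝ 2 w₁ (closedBall 0 1))
    (hreg₂ : ContDiffOn ℝ 2 w₂ (closedBall 0 1))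
    (hrad₁ : ∀ x ∈ closedBall (0 : EuclideanSpace ℝ (Fin N)) 1,
      ∀ y ∈ closedBall (0 : EuclideanSpace ℝ (Fin N)) 1, ‖x‖ = ‖y‖ → w₁ x = w₁ y)
    (hrad₂ : ∀ x ∈ closedBall (0 : EuclideanSpace ℝ (Fin N)) 1,
      ∀ y ∈ closedBall (0 : EuclideanSpace ℝ (Fin N)) 1, ‖x‖ = ‖y‖ → w₂ x = w₂ y)
    (heq₁ : ∀ x ∈ ball (0 : EuclideanSpace ℝ (Fin N)) 1,
      -lap w₁ x = (w₁ x + (β * α - μ) * μ / (β ^ 2 * α * γ - μ ^ 2)) *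
        (-(μ * w₁ x) - β * α * w₂ x))
    (heq₂ : ∀ x ∈ ball (0 : EuclideanSpace ℝ (Fin N)) 1,
      -lap w₂ x = (w₂ x + (β * γ - μ) * μ / (β ^ 2 * α * γ - μ ^ 2)) *
        (-(μ * w₂ x) - β * γ * w₁ x)) :
    (∀ x ∈ closedBall (0 : EuclideanSpace ℝ (Fin N)) 1,
        (β * γ - μ) * w₁ x - (β * α - μ) * w₂ x = 0) ∨
      ∀ x : EuclideanSpace ℝ (Fin N), 0 < ‖x‖ → ‖x‖ < 1 →
        (β * γ - μ) * w₁ x - (β * α - μ) * w₂ x = 0 →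
        gradient (fun y => (β * γ - μ) * w₁ y - (β * α - μ) * w₂ y) x ≠ 0 := by
  set v := fun y => (β * γ - μ) * w₁ y - (β * α - μ) * w₂ y
  have hreg : ContDiffOn ℝ 2 v (closedBall 0 1) :=
    (contDiffOn_const.mul hreg₁).sub (contDiffOn_const.mul hreg₂)
  have hrad : RadialOn v (closedBall 0 1) := fun x hx y hy hxy => by
    simp only [v, hrad₁ x hx y hy hxy, hrad₂ x hx y hy hxy]
  have hinterior : ∀ {w : EuclideanSpace ℝ (Fin N) → ℝ}, ContDiffOn ℝ 2 w (closedBall 0 1) →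
      ∀ x ∈ ball 0 1, ContDiffAt ℝ 2 w x := fun hw x hx =>
    hw.contDiffAt (mem_of_superset (isOpen_ball.mem_nhds hx) ball_subset_closedBall)
  rw [lap_eq_laplacian] at heq₁ heq₂
  refine or_iff_not_imp_right.mpr fun hdeg => ?_
  push Not at hdeg
  obtain ⟨x₀, hx₀, hx₀1, hvx₀, hgrad⟩ := hdeg
  exact hrad.eqOn_zero_of_laplacian_eq_mul (hreg.mono ball_subset_closedBall) hreg.continuousOn
    ((continuousOn_const.mul (hreg₁.continuousOn.add hreg₂.continuousOn)).sub
      continuousOn_const |>.mono ball_subset_closedBall)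
    (fun x hx => laplacian_combination_eq_mul (hinterior hreg₁ x hx) (hinterior hreg₂ x hx)
      (heq₁ x hx) (heq₂ x hx))
    (norm_pos_iff.mp hx₀) (mem_ball_zero_iff.mpr hx₀1) hvx₀ hgrad

/-- For the shifted competition system with σ = μ, for any radial solution
(w₁, w₂), the combination v = (βγ − μ)w₁ − (βα − μ)w₂ is either identically zero on the
closed unit ball, or all its zeros in the punctured open ball are simple. -/
theorem combination_zero_or_simple_roots
    {N : ℕ} (hN : 2 ≤ N) (μ α γ β : ℝ)
    (hαγ : γ < α) (hγ : 0 < γ) (hμ : 0 < μ) (hβ : μ / γ < β)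
    (w₁ w₂ : EuclideanSpace ℝ (Fin N) → ℝ)
    (hreg₁ : ContDiffOn ℝ 2 w₁ (closedBall 0 1))
    (hreg₂ : ContDiffOn ℝ 2 w₂ (closedBall 0 1))
    (hrad₁ : ∀ x ∈ closedBall (0 : EuclideanSpace ℝ (Fin N)) 1,
      ∀ y ∈ closedBall (0 : EuclideanSpace ℝ (Fin N)) 1, ‖x‖ = ‖y‖ → w₁ x = w₁ y)
    (hrad₂ : ∀ x ∈ closedBall (0 : EuclideanSpace ℝ (Fin N)) 1,
      ∀ y ∈ closedBall (0 : EuclideanSpace ℝ (Fin N)) 1, ‖x‖ = ‖y‖ → w₂ x = w₂ y)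
    (heq₁ : ∀ x ∈ ball (0 : EuclideanSpace ℝ (Fin N)) 1,
      -lap w₁ x = (w₁ x + (β * α - μ) * μ / (β ^ 2 * α * γ - μ ^ 2)) *
        (-(μ * w₁ x) - β * α * w₂ x))
    (heq₂ : ∀ x ∈ ball (0 : EuclideanSpace ℝ (Fin N)) 1,
      -lap w₂ x = (w₂ x + (β * γ - μ) * μ / (β ^ 2 * α * γ - μ ^ 2)) *
        (-(μ * w₂ x) - β * γ * w₁ x))
    (hbc₁ : ∀ x : EuclideanSpace ℝ (Fin N), ‖x‖ = 1 → ⟪gradient w₁ x, x⟫ = 0)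
    (hbc₂ : ∀ x : EuclideanSpace ℝ (Fin N), ‖x‖ = 1 → ⟪gradient w₂ x, x⟫ = 0) :
    (∀ x ∈ closedBall (0 : EuclideanSpace ℝ (Fin N)) 1,
        (β * γ - μ) * w₁ x - (β * α - μ) * w₂ x = 0) ∨
      ∀ x : EuclideanSpace ℝ (Fin N), 0 < ‖x‖ → ‖x‖ < 1 →
        (β * γ - μ) * w₁ x - (β * α - μ) * w₂ x = 0 →
        gradient (fun y => (β * γ - μ) * w₁ y - (β * α - μ) * w₂ y) x ≠ 0 :=
  combination_zero_or_simple_roots_general μ α γ β w₁ w₂ hreg₁ hreg₂ hrad₁ hrad₂ heq₁ heq₂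
end
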